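/- The purified distance is monotone under CPTP maps: for subnormalized states ρ, σ and a completely positive trace-preserving map E, P(E(ρ), E(σ)) ≤ P(ρ,σ). -/

import Mathlib

open scoped Kronecker BigOperators ComplexOrder
open Matrix MeasureTheory

noncomputable section
open scoped Classical

namespace QIT

variable {n m : Type*} [Fintype n] [DecidableEq n] [Fintype m] [DecidableEq m]

/-- Total square root of a positive semidefinite matrix (junk value `0` otherwise). -/
def psdSqrt (M : Matrix n n ℂ) : Matrix n n ℂ :=
  if h : M.PosSemidef then
    (h.1.eigenvectorUnitary : Matrix n n ℂ) *
      Matrix.diagonal ((↑) ∘ (√·) ∘ h.1.eigenvalues) *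
      (star h.1.eigenvectorUnitary : Matrix n n ℂ)
  else 0

/-- Trace norm `‖M‖₁ = tr √(MᴴM)`. -/
def trNorm (M : Matrix n n ℂ) : ℝ :=
  ((psdSqrt (Mᴴ * M)).trace).re

/-- Fidelity `F(ρ,σ) = ‖√ρ √σ‖₁`. -/
def fidelity (ρ σ : Matrix n n ℂ) : ℝ := trNorm (psdSqrt ρ * psdSqrt σ)

/-- Generalized fidelity for subnormalized states. -/
def genFid (ρ σ : Matrix n n ℂ) : ℝ :=
  fidelity ρ σ + Real.sqrt ((1 - ρ.trace.re) * (1 - σ.trace.re))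

/-- Purified distance. -/
def purifiedDist (ρ σ : Matrix n n ℂ) : ℝ := Real.sqrt (1 - (genFid ρ σ) ^ 2)

/-- Subnormalized state. -/
def Subnormalized (ρ : Matrix n n ℂ) : Prop := ρ.PosSemidef ∧ ρ.trace.re ≤ 1

/-- Normalized state (density operator). -/
def IsDensity (ρ : Matrix n n ℂ) : Prop := ρ.PosSemidef ∧ ρ.trace = 1

/-- Max-relative entropy `D_max(ρ‖σ) = inf {λ | 2^λ σ ≥ ρ}`. -/
def Dmax (ρ σ : Matrix n n ℂ) : ℝ :=
  sInf {l : ℝ | ((2 : ℝ) ^ l • σ - ρ).PosSemidef}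

/-- Functional calculus for Hermitian matrices (junk value `0` otherwise). -/
def fcal (f : ℝ → ℝ) (M : Matrix n n ℂ) : Matrix n n ℂ :=
  if h : M.IsHermitian then
    (h.eigenvectorUnitary : Matrix n n ℂ) *
      Matrix.diagonal (fun i => (f (h.eigenvalues i) : ℂ)) *
      (star (h.eigenvectorUnitary : Matrix n n ℂ))
  else 0

/-- Projector onto the support of a Hermitian matrix. -/
def suppProj (M : Matrix n n ℂ) : Matrix n n ℂ :=
  fcal (fun x => if x = 0 then 0 else 1) M

/-- Moore–Penrose style pseudo negative power `M^{-r}` of a Hermitian matrix. -/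
def pinvPow (r : ℝ) (M : Matrix n n ℂ) : Matrix n n ℂ :=
  fcal (fun x => if x = 0 then 0 else x ^ (-r)) M

/-- `supp ρ ⊆ supp σ`, expressed via kernels. -/
def suppLE (ρ σ : Matrix n n ℂ) : Prop :=
  ∀ v : n → ℂ, σ.mulVec v = 0 → ρ.mulVec v = 0

/-- Operator norm of a matrix. -/
def opNorm (M : Matrix n n ℂ) : ℝ := ‖Matrix.toEuclideanCLM (𝕜 := ℂ) M‖

/-- Matrix logarithm in base 2 (on the support). -/
def matLog2 (M : Matrix n n ℂ) : Matrix n n ℂ := fcal (Real.logb 2) M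

/-- Quantum relative entropy (base 2). -/
def relEnt (ρ σ : Matrix n n ℂ) : ℝ :=
  ((ρ * matLog2 ρ).trace).re - ((ρ * matLog2 σ).trace).re

variable {a b : Type*} [Fintype a] [DecidableEq a] [Fintype b] [DecidableEq b]

/-- Partial trace over the second tensor factor. -/
def ptrB (M : Matrix (a × b) (a × b) ℂ) : Matrix a a ℂ :=
  Matrix.of fun i j => ∑ k : b, M (i, k) (j, k)

/-- Partial trace over the first tensor factor. -/
def ptrA (M : Matrix (a × b) (a × b) ℂ) : Matrix b b ℂ :=
  Matrix.of fun i j => ∑ k : a, M (k, i) (k, j)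

/-- Max-information `I_max(A:B)_ρ = min_{σ_B density} D_max(ρ_AB‖ρ_A⊗σ_B)`. -/
def Imax (ρ : Matrix (a × b) (a × b) ℂ) : ℝ :=
  sInf {x : ℝ | ∃ σ : Matrix b b ℂ, IsDensity σ ∧ x = Dmax ρ (ptrB ρ ⊗ₖ σ)}

/-- Conditional min-entropy `H_min(A|B)_ρ`. -/
def HminCond (ρ : Matrix (a × b) (a × b) ℂ) : ℝ :=
  - sInf {x : ℝ | ∃ σ : Matrix b b ℂ, IsDensity σ ∧ x = Dmax ρ ((1 : Matrix a a ℂ) ⊗ₖ σ)}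

/-- Smooth max-information. -/
def smoothImax (ε : ℝ) (ρ : Matrix (a × b) (a × b) ℂ) : ℝ :=
  sInf {x : ℝ | ∃ ρ' : Matrix (a × b) (a × b) ℂ,
    Subnormalized ρ' ∧ purifiedDist ρ ρ' ≤ ε ∧ x = Imax ρ'}

/-- Tensor extension `Φ ⊗ id_d` of a map on matrices. -/
def tensorExt (Φ : Matrix a a ℂ → Matrix b b ℂ) (d : ℕ)
    (M : Matrix (a × Fin d) (a × Fin d) ℂ) : Matrix (b × Fin d) (b × Fin d) ℂ :=
  Matrix.of fun p q => Φ (Matrix.of fun i j => M (i, p.2) (j, q.2)) p.1 q.1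

/-- Completely positive trace preserving maps. -/
def IsCPTP (Φ : Matrix a a ℂ →ₗ[ℂ] Matrix b b ℂ) : Prop :=
  (∀ d : ℕ, ∀ M : Matrix (a × Fin d) (a × Fin d) ℂ,
      M.PosSemidef → (tensorExt Φ d M).PosSemidef) ∧
  (∀ M : Matrix a a ℂ, (Φ M).trace = M.trace)

end QIT

open QIT

/-! Since `Φ` preserves traces, `genFid ρ σ` and `genFid (Φ ρ) (Φ σ)` differ only in their fidelity
terms, so it suffices that `F(ρ, σ) ≤ F(Φ ρ, Φ σ)`. The fidelity is the optimal value of a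
semidefinite program: `F(ρ, σ) = max {Re tr X | [[ρ, X], [Xᴴ, σ]] ≥ 0}`. The maximum is attained at
`X = √ρ W √σ`, where `√ρ √σ = W |√ρ √σ|` is a polar decomposition. Conversely, a feasible block
matrix factors as `[[Aᴴ A, Aᴴ B], [Bᴴ A, Bᴴ B]]`, and writing `A = U √ρ`, `B = V √σ` gives
`Re tr X = Re tr (Vᴴ U √ρ √σ) ≤ ‖√ρ √σ‖₁`, because `Re tr (K N) ≤ ‖N‖₁` for every contraction `K`.
Complete positivity of `Φ` maps the optimal block matrix for `(ρ, σ)` to a feasible one for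
`(Φ ρ, Φ σ)` with the same trace of the off-diagonal block. -/

namespace QIT

section BlockMatrices

variable {d k : Type*}

/-- `Matrix.fromBlocks A B C D`, but indexed by `d × Fin 2` as `tensorExt Φ 2` requires. -/
def fromBlocks₂ (A B C D : Matrix d d ℂ) : Matrix (d × Fin 2) (d × Fin 2) ℂ :=
  of fun p q => ![![A, B], ![C, D]] p.2 q.2 p.1 q.1

def fromCols₂ (A B : Matrix k d ℂ) : Matrix k (d × Fin 2) ℂ :=
  of fun r q => ![A, B] q.2 r q.1

lemma exists_eq_fromCols₂ (C : Matrix k (d × Fin 2) ℂ) : ∃ A B, C = fromCols₂ A B :=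
  ⟨of fun r j => C r (j, 0), of fun r j => C r (j, 1), by ext r ⟨j, a⟩; fin_cases a <;> rfl⟩

lemma conjTranspose_fromCols₂_mul_fromCols₂ [Fintype k] (A B : Matrix k d ℂ) :
    (fromCols₂ A B)ᴴ * fromCols₂ A B = fromBlocks₂ (Aᴴ * A) (Aᴴ * B) (Bᴴ * A) (Bᴴ * B) := by
  ext ⟨i, a⟩ ⟨j, b⟩
  fin_cases a <;> fin_cases b <;> simp [fromCols₂, fromBlocks₂, mul_apply]

lemma fromBlocks₂_add (A B C D A' B' C' D' : Matrix d d ℂ) :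
    fromBlocks₂ A B C D + fromBlocks₂ A' B' C' D' =
      fromBlocks₂ (A + A') (B + B') (C + C') (D + D') := by
  ext ⟨i, a⟩ ⟨j, b⟩
  fin_cases a <;> fin_cases b <;> rfl

lemma fromBlocks₂_inj {A B C D A' B' C' D' : Matrix d d ℂ} :
    fromBlocks₂ A B C D = fromBlocks₂ A' B' C' D' ↔ A = A' ∧ B = B' ∧ C = C' ∧ D = D' := by
  refine ⟨fun h => ?_, by rintro ⟨rfl, rfl, rfl, rfl⟩; rfl⟩
  refine ⟨?_, ?_, ?_, ?_⟩ <;> ext i j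
  exacts [congr_fun₂ h (i, 0) (j, 0), congr_fun₂ h (i, 0) (j, 1), congr_fun₂ h (i, 1) (j, 0),
    congr_fun₂ h (i, 1) (j, 1)]

lemma tensorExt_fromBlocks₂ {m : Type*} (Φ : Matrix d d ℂ → Matrix m m ℂ)
    (A B C D : Matrix d d ℂ) :
    tensorExt Φ 2 (fromBlocks₂ A B C D) = fromBlocks₂ (Φ A) (Φ B) (Φ C) (Φ D) := by
  ext ⟨i, a⟩ ⟨j, b⟩
  fin_cases a <;> fin_cases b <;> rfl

end BlockMatrices

variable {d k l : Type*} [Fintype d] [DecidableEq d] [Fintype k]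

section FunctionalCalculus

variable {M : Matrix d d ℂ} (hM : M.IsHermitian)
include hM

lemma fcal_eq (f : ℝ → ℝ) :
    fcal f M = (hM.eigenvectorUnitary : Matrix d d ℂ) *
      diagonal (fun i => (f (hM.eigenvalues i) : ℂ)) *
      star (hM.eigenvectorUnitary : Matrix d d ℂ) :=
  dif_pos hM

lemma fcal_congr {f g : ℝ → ℝ} (hfg : ∀ i, f (hM.eigenvalues i) = g (hM.eigenvalues i)) :
    fcal f M = fcal g M := by
  simp only [fcal_eq hM, hfg]

lemma fcal_id : fcal (fun x => x) M = M := by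
  rw [fcal_eq hM]
  conv_rhs => rw [hM.spectral_theorem]
  rfl

lemma fcal_mul_fcal (f g : ℝ → ℝ) : fcal f M * fcal g M = fcal (fun x => f x * g x) M := by
  have hU : star (hM.eigenvectorUnitary : Matrix d d ℂ) * hM.eigenvectorUnitary = 1 :=
    Unitary.star_mul_self_of_mem hM.eigenvectorUnitary.2
  simp only [fcal_eq hM, Matrix.mul_assoc]
  rw [← Matrix.mul_assoc (star _) (hM.eigenvectorUnitary : Matrix d d ℂ), hU, Matrix.one_mul,
    ← Matrix.mul_assoc (diagonal _), diagonal_mul_diagonal]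
  push_cast
  rfl

lemma isHermitian_fcal (f : ℝ → ℝ) : (fcal f M).IsHermitian := by
  rw [fcal_eq hM, star_eq_conjTranspose]
  exact isHermitian_mul_mul_conjTranspose _
    (isHermitian_diagonal_of_self_adjoint _ (by ext; simp))

lemma posSemidef_fcal {f : ℝ → ℝ} (hf : ∀ i, 0 ≤ f (hM.eigenvalues i)) :
    (fcal f M).PosSemidef := by
  rw [fcal_eq hM, star_eq_conjTranspose]
  exact (posSemidef_diagonal_iff.mpr fun i => by exact_mod_cast hf i).mul_mul_conjTranspose_same _

end FunctionalCalculus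

section PsdSqrt

variable {M : Matrix d d ℂ} (hM : M.PosSemidef)
include hM

lemma psdSqrt_eq_fcal : psdSqrt M = fcal Real.sqrt M := by
  rw [psdSqrt, dif_pos hM, fcal, dif_pos hM.1]
  rfl

lemma posSemidef_psdSqrt : (psdSqrt M).PosSemidef := by
  rw [psdSqrt_eq_fcal hM]
  exact posSemidef_fcal hM.1 fun _ => Real.sqrt_nonneg _

lemma psdSqrt_mul_self : psdSqrt M * psdSqrt M = M := by
  rw [psdSqrt_eq_fcal hM, fcal_mul_fcal hM.1]
  conv_rhs => rw [← fcal_id hM.1]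
  exact fcal_congr hM.1 fun i => Real.mul_self_sqrt (hM.eigenvalues_nonneg i)

lemma conjTranspose_psdSqrt_mul_psdSqrt : (psdSqrt M)ᴴ * psdSqrt M = M := by
  rw [(posSemidef_psdSqrt hM).1.eq, psdSqrt_mul_self hM]

end PsdSqrt

lemma trNorm_nonneg (N : Matrix d d ℂ) : 0 ≤ trNorm N :=
  (Complex.nonneg_iff.mp
    (posSemidef_psdSqrt (posSemidef_conjTranspose_mul_self N)).trace_nonneg).1

section Support

variable {M : Matrix d d ℂ} (hM : M.IsHermitian)
include hM

lemma self_mul_suppProj : M * suppProj M = M := by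
  nth_rw 1 [← fcal_id hM]
  rw [suppProj, fcal_mul_fcal hM]
  conv_rhs => rw [← fcal_id hM]
  exact fcal_congr hM fun i => by split_ifs <;> simp_all

lemma suppProj_mul_self : suppProj M * M = M := by
  nth_rw 2 [← fcal_id hM]
  rw [suppProj, fcal_mul_fcal hM]
  conv_rhs => rw [← fcal_id hM]
  exact fcal_congr hM fun i => by split_ifs <;> simp_all

lemma suppProj_mul_suppProj : suppProj M * suppProj M = suppProj M := by
  rw [suppProj, fcal_mul_fcal hM]
  exact fcal_congr hM fun i => by split_ifs <;> simp

lemma pinvPow_one_mul_self : pinvPow 1 M * M = suppProj M := by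
  nth_rw 2 [← fcal_id hM]
  rw [pinvPow, suppProj, fcal_mul_fcal hM]
  exact fcal_congr hM fun i => by split_ifs with h <;> simp [h, Real.rpow_neg_one]

lemma self_mul_pinvPow_one : M * pinvPow 1 M = suppProj M := by
  nth_rw 1 [← fcal_id hM]
  rw [pinvPow, suppProj, fcal_mul_fcal hM]
  exact fcal_congr hM fun i => by split_ifs with h <;> simp [h, Real.rpow_neg_one]

lemma pinvPow_one_mul_suppProj : pinvPow 1 M * suppProj M = pinvPow 1 M := by
  rw [pinvPow, suppProj, fcal_mul_fcal hM]
  exact fcal_congr hM fun i => by split_ifs <;> simp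

end Support

lemma posSemidef_one_sub_of_idempotent {Q : Matrix d d ℂ} (hQ : Q.IsHermitian) (hQQ : Q * Q = Q) :
    (1 - Q).PosSemidef := by
  have h : (1 - Q)ᴴ * (1 - Q) = 1 - Q := by
    rw [conjTranspose_sub, conjTranspose_one, hQ.eq, sub_mul, mul_sub, mul_sub, hQQ]
    simp
  exact h ▸ posSemidef_conjTranspose_mul_self _

def IsContraction (K : Matrix k d ℂ) : Prop := (1 - Kᴴ * K).PosSemidef

lemma IsContraction.mul [Fintype l] [DecidableEq l] {K : Matrix k l ℂ} {L : Matrix l d ℂ}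
    (hK : IsContraction K) (hL : IsContraction L) : IsContraction (K * L) := by
  have h : 1 - (K * L)ᴴ * (K * L) = Lᴴ * (1 - Kᴴ * K) * L + (1 - Lᴴ * L) := by
    simp only [conjTranspose_mul, Matrix.mul_sub, Matrix.sub_mul, Matrix.mul_one,
      Matrix.mul_assoc]
    abel
  rw [IsContraction, h]
  exact (hK.conjTranspose_mul_mul_same L).add hL

lemma mul_suppProj_of_conjTranspose_mul_self_eq {N : Matrix k d ℂ} {S : Matrix d d ℂ}
    (hS : S.IsHermitian) (hNS : Nᴴ * N = S * S) : N * suppProj S = N := by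
  have hS0 : S * (1 - suppProj S) = 0 := by
    rw [mul_sub, Matrix.mul_one, self_mul_suppProj hS, sub_self]
  have h : (N * (1 - suppProj S))ᴴ * (N * (1 - suppProj S)) = 0 := by
    rw [conjTranspose_mul, Matrix.mul_assoc, ← Matrix.mul_assoc Nᴴ, hNS, Matrix.mul_assoc, hS0,
      Matrix.mul_zero, Matrix.mul_zero]
  rw [conjTranspose_mul_self_eq_zero, Matrix.mul_sub, Matrix.mul_one, sub_eq_zero] at h
  exact h.symm

theorem exists_polarDecomposition [DecidableEq k] (N : Matrix k d ℂ) :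
    ∃ W : Matrix k d ℂ, W * psdSqrt (Nᴴ * N) = N ∧ Wᴴ * N = psdSqrt (Nᴴ * N) ∧
      IsContraction W ∧ IsContraction Wᴴ := by
  have hN := posSemidef_conjTranspose_mul_self N
  set S := psdSqrt (Nᴴ * N)
  have hS : S.IsHermitian := (posSemidef_psdSqrt hN).1
  have hNS : Nᴴ * N = S * S := (psdSqrt_mul_self hN).symm
  have hT : (pinvPow 1 S)ᴴ = pinvPow 1 S := (isHermitian_fcal hS _).eq
  set W := N * pinvPow 1 S
  have hWN : Wᴴ * N = pinvPow 1 S * S * S := by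
    rw [conjTranspose_mul, hT, Matrix.mul_assoc, hNS, Matrix.mul_assoc]
  have hWW : Wᴴ * W = suppProj S := by
    rw [← Matrix.mul_assoc, hWN, Matrix.mul_assoc, Matrix.mul_assoc, self_mul_pinvPow_one hS,
      ← Matrix.mul_assoc, pinvPow_one_mul_self hS, suppProj_mul_suppProj hS]
  refine ⟨W, ?_, ?_, ?_, ?_⟩
  · rw [Matrix.mul_assoc, pinvPow_one_mul_self hS,
      mul_suppProj_of_conjTranspose_mul_self_eq hS hNS]
  · rw [hWN, pinvPow_one_mul_self hS, suppProj_mul_self hS]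
  · rw [IsContraction, hWW]
    exact posSemidef_one_sub_of_idempotent (isHermitian_fcal hS _) (suppProj_mul_suppProj hS)
  · rw [IsContraction, conjTranspose_conjTranspose]
    refine posSemidef_one_sub_of_idempotent (isHermitian_mul_conjTranspose_self W) ?_
    rw [Matrix.mul_assoc, ← Matrix.mul_assoc Wᴴ, hWW]
    simp only [W, Matrix.mul_assoc, ← Matrix.mul_assoc (pinvPow 1 S), pinvPow_one_mul_suppProj hS]

lemma IsContraction.re_trace_mul_le {K S : Matrix d d ℂ} (hK : IsContraction K)
    (hS : S.PosSemidef) : (K * S).trace.re ≤ S.trace.re := by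
  set R := psdSqrt S
  have hR : Rᴴ = R := (posSemidef_psdSqrt hS).1.eq
  have hRR : R * Rᴴ = S := by rw [hR, psdSqrt_mul_self hS]
  -- `2 Re tr (K S) = tr S + tr (Rᴴ Kᴴ K R) - ‖K R - R‖²`, and `tr (Rᴴ Kᴴ K R) ≤ tr S`
  have hsum : (K * R - R)ᴴ * (K * R - R) + Rᴴ * (1 - Kᴴ * K) * R
      = Rᴴ * R + Rᴴ * R - Rᴴ * K * R - (Rᴴ * K * R)ᴴ := by
    simp only [conjTranspose_mul, conjTranspose_sub, conjTranspose_conjTranspose, mul_sub,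
      sub_mul, Matrix.mul_one, Matrix.mul_assoc]
    abel
  have hpos := ((posSemidef_conjTranspose_mul_self (K * R - R)).add
    (hK.conjTranspose_mul_mul_same R)).trace_nonneg
  rw [hsum, trace_sub, trace_sub, trace_add, trace_conjTranspose, trace_mul_comm Rᴴ R,
    trace_mul_cycle, hRR, trace_mul_comm S] at hpos
  have := (Complex.nonneg_iff.mp hpos).1
  simp only [Complex.sub_re, Complex.add_re, Complex.star_def, Complex.conj_re] at this
  linarith

lemma IsContraction.re_trace_mul_le_trNorm {K : Matrix d d ℂ} (hK : IsContraction K)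
    (N : Matrix d d ℂ) : (K * N).trace.re ≤ trNorm N := by
  obtain ⟨W, hWN, -, hW, -⟩ := exists_polarDecomposition N
  calc (K * N).trace.re = (K * W * psdSqrt (Nᴴ * N)).trace.re := by rw [Matrix.mul_assoc, hWN]
    _ ≤ trNorm N :=
      (hK.mul hW).re_trace_mul_le (posSemidef_psdSqrt (posSemidef_conjTranspose_mul_self N))

theorem re_trace_conjTranspose_mul_le_fidelity [DecidableEq k] (A B : Matrix k d ℂ) :
    (Aᴴ * B).trace.re ≤ fidelity (Aᴴ * A) (Bᴴ * B) := by
  obtain ⟨U, hA, -, hU, -⟩ := exists_polarDecomposition A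
  obtain ⟨V, hB, -, -, hV⟩ := exists_polarDecomposition B
  have hPB := (posSemidef_psdSqrt (posSemidef_conjTranspose_mul_self B)).1
  calc (Aᴴ * B).trace.re = (Bᴴ * A).trace.re := by
        rw [← conjTranspose_conjTranspose A, ← conjTranspose_mul, trace_conjTranspose,
          conjTranspose_conjTranspose, Complex.star_def, Complex.conj_re]
    _ = (Vᴴ * U * (psdSqrt (Aᴴ * A) * psdSqrt (Bᴴ * B))).trace.re := by
        conv_lhs => rw [← hA, ← hB]
        rw [conjTranspose_mul, hPB.eq, Matrix.mul_assoc, trace_mul_comm]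
        simp only [Matrix.mul_assoc]
    _ ≤ fidelity (Aᴴ * A) (Bᴴ * B) := (hV.mul hU).re_trace_mul_le_trNorm _

lemma posSemidef_fromBlocks₂_of_isContraction [Fintype l] (P : Matrix k l ℂ) (Q : Matrix d l ℂ)
    {K : Matrix k d ℂ} (hK : IsContraction K) :
    (fromBlocks₂ (Pᴴ * P) (Pᴴ * K * Q) (Pᴴ * K * Q)ᴴ (Qᴴ * Q)).PosSemidef := by
  set R := psdSqrt (1 - Kᴴ * K)
  have hR : Rᴴ * R = 1 - Kᴴ * K := conjTranspose_psdSqrt_mul_psdSqrt hK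
  have h : fromBlocks₂ (Pᴴ * P) (Pᴴ * K * Q) (Pᴴ * K * Q)ᴴ (Qᴴ * Q) =
      (fromCols₂ P (K * Q))ᴴ * fromCols₂ P (K * Q) +
        (fromCols₂ 0 (R * Q))ᴴ * fromCols₂ 0 (R * Q) := by
    rw [conjTranspose_fromCols₂_mul_fromCols₂, conjTranspose_fromCols₂_mul_fromCols₂,
      fromBlocks₂_add]
    congr 1
    · simp
    · simp [Matrix.mul_assoc]
    · simp [conjTranspose_mul, Matrix.mul_assoc]
    · simp only [conjTranspose_mul, Matrix.mul_assoc, ← Matrix.mul_add]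
      rw [← Matrix.mul_assoc Rᴴ, hR, ← Matrix.mul_assoc Kᴴ, ← Matrix.add_mul]
      simp
  rw [h]
  exact (posSemidef_conjTranspose_mul_self _).add (posSemidef_conjTranspose_mul_self _)

theorem exists_posSemidef_fromBlocks₂_re_trace_eq_fidelity {ρ σ : Matrix d d ℂ}
    (hρ : ρ.PosSemidef) (hσ : σ.PosSemidef) :
    ∃ X, (fromBlocks₂ ρ X Xᴴ σ).PosSemidef ∧ X.trace.re = fidelity ρ σ := by
  set P := psdSqrt ρ
  set Q := psdSqrt σ
  obtain ⟨W, -, hWN, hW, -⟩ := exists_polarDecomposition (P * Q)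
  have hP : Pᴴ * P = ρ := conjTranspose_psdSqrt_mul_psdSqrt hρ
  have hQ : Qᴴ * Q = σ := conjTranspose_psdSqrt_mul_psdSqrt hσ
  refine ⟨Pᴴ * W * Q, ?_, ?_⟩
  · simpa only [hP, hQ] using posSemidef_fromBlocks₂_of_isContraction P Q hW
  · calc (Pᴴ * W * Q).trace.re = (Qᴴ * (Wᴴ * P)).trace.re := by
          rw [← conjTranspose_conjTranspose (Pᴴ * W * Q), trace_conjTranspose, Complex.star_def,
            Complex.conj_re, conjTranspose_mul, conjTranspose_mul, conjTranspose_conjTranspose]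
      _ = (Wᴴ * (P * Q)).trace.re := by
          rw [trace_mul_comm, (posSemidef_psdSqrt hσ).1.eq, Matrix.mul_assoc]
      _ = fidelity ρ σ := by rw [hWN]; rfl

theorem re_trace_le_fidelity_of_posSemidef_fromBlocks₂ {ρ X Y σ : Matrix d d ℂ}
    (h : (fromBlocks₂ ρ X Y σ).PosSemidef) : X.trace.re ≤ fidelity ρ σ := by
  obtain ⟨A, B, hAB⟩ := exists_eq_fromCols₂ (psdSqrt (fromBlocks₂ ρ X Y σ))
  have hC := conjTranspose_psdSqrt_mul_psdSqrt h
  rw [hAB, conjTranspose_fromCols₂_mul_fromCols₂, fromBlocks₂_inj] at hC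
  obtain ⟨hρ, hX, -, hσ⟩ := hC
  rw [← hρ, ← hX, ← hσ]
  exact re_trace_conjTranspose_mul_le_fidelity A B

theorem fidelity_le_fidelity_of_isCPTP {m : Type*} [Fintype m] [DecidableEq m]
    {Φ : Matrix d d ℂ →ₗ[ℂ] Matrix m m ℂ} (hΦ : IsCPTP Φ) {ρ σ : Matrix d d ℂ}
    (hρ : ρ.PosSemidef) (hσ : σ.PosSemidef) : fidelity ρ σ ≤ fidelity (Φ ρ) (Φ σ) := by
  obtain ⟨X, hX, hXtr⟩ := exists_posSemidef_fromBlocks₂_re_trace_eq_fidelity hρ hσ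
  have hΦX := hΦ.1 2 _ hX
  rw [tensorExt_fromBlocks₂] at hΦX
  calc fidelity ρ σ = (Φ X).trace.re := by rw [hΦ.2, hXtr]
    _ ≤ fidelity (Φ ρ) (Φ σ) := re_trace_le_fidelity_of_posSemidef_fromBlocks₂ hΦX

lemma genFid_nonneg (ρ σ : Matrix d d ℂ) : 0 ≤ genFid ρ σ :=
  add_nonneg (trNorm_nonneg _) (Real.sqrt_nonneg _)

theorem genFid_le_genFid_of_isCPTP {m : Type*} [Fintype m] [DecidableEq m]
    {Φ : Matrix d d ℂ →ₗ[ℂ] Matrix m m ℂ} (hΦ : IsCPTP Φ) {ρ σ : Matrix d d ℂ}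
    (hρ : ρ.PosSemidef) (hσ : σ.PosSemidef) : genFid ρ σ ≤ genFid (Φ ρ) (Φ σ) := by
  rw [genFid, genFid, hΦ.2, hΦ.2]
  linarith [fidelity_le_fidelity_of_isCPTP hΦ hρ hσ]

end QIT

/-- The purified distance is monotone under CPTP maps. -/
theorem purifiedDist_mono_CPTP {n m : Type*} [Fintype n] [DecidableEq n]
    [Fintype m] [DecidableEq m]
    (Φ : Matrix n n ℂ →ₗ[ℂ] Matrix m m ℂ) (hΦ : IsCPTP Φ)
    (ρ σ : Matrix n n ℂ) (hρ : Subnormalized ρ) (hσ : Subnormalized σ) :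
    purifiedDist (Φ ρ) (Φ σ) ≤ purifiedDist ρ σ := by
  have hF := genFid_le_genFid_of_isCPTP hΦ hρ.1 hσ.1
  have hF₀ := genFid_nonneg ρ σ
  unfold purifiedDist
  gcongr
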